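/- Let H be a real N×p matrix, y ∈ ℝ^N, μ > 0, and s ∈ ℝ^p with ‖s‖₀ ≤ r. Define ŝ = 𝒯_r(s + μ Hᵀ(y - H s)), where 𝒯_r is the hard thresholding operator keeping the r largest-magnitude entries. If 0 < μ ≤ 1/ρ_H² where ρ_H is the spectral norm of H, then ‖y - H ŝ‖₂² + (1/μ - ρ_H²)‖ŝ - s‖₂² ≤ ‖y - H s‖₂². -/
import Mathlib


open Matrix Finset Filter

/-- Squared Euclidean norm of a vector. -/
def sqNorm {n : Type*} [Fintype n] (v : n → ℝ) : ℝ := ∑ i, (v i)^2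

/-- Spectral norm (largest singular value) of a real matrix,
as the operator 2-norm of the associated Euclidean linear map. -/
noncomputable def specNorm {m n : Type*} [Fintype m] [Fintype n] [DecidableEq n]
    (H : Matrix m n ℝ) : ℝ :=
  ‖LinearMap.toContinuousLinearMap (Matrix.toEuclideanLin H)‖

/-- Number of nonzero entries (ℓ₀ "norm") of a vector. -/
noncomputable def l0 {n : Type*} [Fintype n] (v : n → ℝ) : ℕ :=
  (Set.toFinite (Function.support v)).toFinset.card

/-- `w` is a hard-thresholding of `v` at sparsity level `r`: `w` agrees with `v`
on a set `S` of `min r p` indices of largest magnitude and is zero elsewhere. -/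
def IsHardThreshold {n : Type*} [Fintype n] (r : ℕ) (v w : n → ℝ) : Prop :=
  ∃ S : Finset n, S.card = min r (Fintype.card n) ∧ (∀ i ∈ S, w i = v i) ∧
    (∀ i ∉ S, w i = 0) ∧ ∀ i ∈ S, ∀ j ∉ S, |v j| ≤ |v i|

lemma sqNorm_nonneg {n : Type*} [Fintype n] (v : n → ℝ) : 0 ≤ sqNorm v :=
  Finset.sum_nonneg fun i _ => sq_nonneg _

lemma sqNorm_sub {n : Type*} [Fintype n] (u w : n → ℝ) :
    sqNorm (u - w) = sqNorm u - 2 * (u ⬝ᵥ w) + sqNorm w := by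
  simp only [sqNorm, dotProduct, Finset.mul_sum, ← Finset.sum_add_distrib,
    ← Finset.sum_sub_distrib, Pi.sub_apply]
  exact Finset.sum_congr rfl fun i _ => by ring

lemma sqNorm_eq_norm_sq {n : Type*} [Fintype n] (v : n → ℝ) :
    sqNorm v = ‖(WithLp.equiv 2 (n → ℝ)).symm v‖ ^ 2 := by
  rw [EuclideanSpace.norm_eq, Real.sq_sqrt (Finset.sum_nonneg fun i _ => sq_nonneg _)]
  simp [sqNorm, sq_abs]

lemma sqNorm_mulVec_le {m n : Type*} [Fintype m] [Fintype n] [DecidableEq n]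
    (H : Matrix m n ℝ) (x : n → ℝ) :
    sqNorm (H.mulVec x) ≤ (specNorm H)^2 * sqNorm x := by
  have h := (LinearMap.toContinuousLinearMap (Matrix.toEuclideanLin H)).le_opNorm
    ((WithLp.equiv 2 (n → ℝ)).symm x)
  have happ : (LinearMap.toContinuousLinearMap (Matrix.toEuclideanLin H))
      ((WithLp.equiv 2 (n → ℝ)).symm x) = (WithLp.equiv 2 (m → ℝ)).symm (H.mulVec x) := by
    simp [LinearMap.coe_toContinuousLinearMap', Matrix.toEuclideanLin_apply]
  rw [happ] at h
  rw [sqNorm_eq_norm_sq, sqNorm_eq_norm_sq (v := x)]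
  calc ‖(WithLp.equiv 2 (m → ℝ)).symm (H.mulVec x)‖^2
      ≤ (specNorm H * ‖(WithLp.equiv 2 (n → ℝ)).symm x‖)^2 := by
        apply pow_le_pow_left₀ (norm_nonneg _) h 2
    _ = (specNorm H)^2 * ‖(WithLp.equiv 2 (n → ℝ)).symm x‖^2 := by ring

lemma sum_le_sum_of_card_le {α : Type*} [DecidableEq α] {A B : Finset α} {f g : α → ℝ}
    (hcard : A.card ≤ B.card) (hfg : ∀ a ∈ A, ∀ b ∈ B, f a ≤ g b)
    (hg : ∀ b ∈ B, 0 ≤ g b) : ∑ a ∈ A, f a ≤ ∑ b ∈ B, g b := by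
  rcases B.eq_empty_or_nonempty with rfl | hB
  · simp only [Finset.card_empty, Nat.le_zero, Finset.card_eq_zero] at hcard
    simp [hcard]
  · obtain ⟨b0, hb0, hmin⟩ := B.exists_min_image g hB
    calc ∑ a ∈ A, f a ≤ ∑ _a ∈ A, g b0 := Finset.sum_le_sum fun a ha => hfg a ha b0 hb0
      _ = A.card • g b0 := by rw [Finset.sum_const]
      _ ≤ B.card • g b0 := by
          have := hg b0 hb0
          exact nsmul_le_nsmul_left this hcard
      _ ≤ ∑ b ∈ B, g b := Finset.card_nsmul_le_sum B g _ hmin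

/-- Hard thresholding is an optimal r-sparse approximation (vs an r-sparse vector). -/
lemma hardThreshold_opt {n : Type*} [Fintype n] [DecidableEq n] {r : ℕ} {v w s : n → ℝ}
    (hw : IsHardThreshold r v w) (hs : l0 s ≤ r) :
    sqNorm (w - v) ≤ sqNorm (s - v) := by
  obtain ⟨S, hScard, hSeq, hSzero, hSmax⟩ := hw
  set T : Finset n := (Set.toFinite (Function.support s)).toFinset with hT
  have hsT : ∀ i ∉ T, s i = 0 := by
    intro i hi
    by_contra h
    exact hi (by simpa [hT, Function.support] using h)
  have hTcard : T.card ≤ S.card := by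
    rw [hScard]
    exact le_min hs (by simpa using Finset.card_le_univ T)
  -- split sums over S and Sᶜ
  have expand : ∀ u : n → ℝ, sqNorm (u - v) =
      ∑ i ∈ S, (u i - v i)^2 + ∑ i ∈ Sᶜ, (u i - v i)^2 := by
    intro u
    simp [sqNorm, Finset.sum_add_sum_compl]
  rw [expand, expand]
  have hL1 : ∑ i ∈ S, (w i - v i)^2 = 0 := by
    apply Finset.sum_eq_zero; intro i hi; rw [hSeq i hi]; ring
  rw [hL1, zero_add]
  -- split Sᶜ into (Sᶜ ∩ T) and (Sᶜ \ T)
  have hsplit : ∀ u : n → ℝ, ∑ i ∈ Sᶜ, (u i - v i)^2 =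
      ∑ i ∈ Sᶜ ∩ T, (u i - v i)^2 + ∑ i ∈ Sᶜ \ T, (u i - v i)^2 :=
    fun u => (Finset.sum_inter_add_sum_sdiff Sᶜ T _).symm
  rw [hsplit, hsplit]
  have heq : ∑ i ∈ Sᶜ \ T, (w i - v i)^2 = ∑ i ∈ Sᶜ \ T, (s i - v i)^2 := by
    apply Finset.sum_congr rfl
    intro i hi
    rw [Finset.mem_sdiff, Finset.mem_compl] at hi
    rw [hSzero i hi.1, hsT i hi.2]
  rw [heq]
  have key : ∑ i ∈ Sᶜ ∩ T, (w i - v i)^2 ≤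
      ∑ i ∈ S \ T, (s i - v i)^2 + ∑ i ∈ Sᶜ ∩ T, (s i - v i)^2 := by
    have h1 : ∑ i ∈ Sᶜ ∩ T, (w i - v i)^2 ≤ ∑ i ∈ S \ T, (s i - v i)^2 := by
      apply sum_le_sum_of_card_le
      · -- card (Sᶜ ∩ T) ≤ card (S \ T)
        have e1 : (Sᶜ ∩ T).card = (T \ S).card := by
          congr 1; ext i; simp [Finset.mem_sdiff, Finset.mem_inter, and_comm]
        have e2 : (T \ S).card + (T ∩ S).card = T.card := Finset.card_sdiff_add_card_inter T S
        have e3 : (S \ T).card + (S ∩ T).card = S.card := Finset.card_sdiff_add_card_inter S T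
        have e4 : (T ∩ S).card = (S ∩ T).card := by rw [Finset.inter_comm]
        omega
      · intro a ha b hb
        rw [Finset.mem_inter, Finset.mem_compl] at ha
        rw [Finset.mem_sdiff] at hb
        rw [hSzero a ha.1, hsT b hb.2]
        have := hSmax b hb.1 a ha.1
        calc (0 - v a)^2 = |v a|^2 := by rw [sq_abs]; ring
          _ ≤ |v b|^2 := pow_le_pow_left₀ (abs_nonneg _) this 2
          _ = (0 - v b)^2 := by rw [sq_abs]; ring
      · intro b _; exact sq_nonneg _
    have h2 : 0 ≤ ∑ i ∈ Sᶜ ∩ T, (s i - v i)^2 := Finset.sum_nonneg fun _ _ => sq_nonneg _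
    linarith
  have hmono : ∑ i ∈ S \ T, (s i - v i)^2 ≤ ∑ i ∈ S, (s i - v i)^2 :=
    Finset.sum_le_sum_of_subset_of_nonneg (Finset.sdiff_subset) (fun _ _ _ => sq_nonneg _)
  linarith

theorem stmt_13 {N p : ℕ} (H : Matrix (Fin N) (Fin p) ℝ) (y : Fin N → ℝ)
    (μ : ℝ) (r : ℕ) (s sh : Fin p → ℝ)
    (hs : l0 s ≤ r)
    (hμ0 : 0 < μ) (hμ : μ ≤ 1 / (specNorm H)^2)
    (hsh : IsHardThreshold r (s + μ • H.transpose.mulVec (y - H.mulVec s)) sh) :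
    sqNorm (y - H.mulVec sh) + (1/μ - (specNorm H)^2) * sqNorm (sh - s) ≤
      sqNorm (y - H.mulVec s) := by
  set e := y - H.mulVec s with he
  set g := μ • H.transpose.mulVec e with hg
  set d := sh - s with hd
  -- optimality of hard threshold
  have hopt : sqNorm (sh - (s + g)) ≤ sqNorm (s - (s + g)) := hardThreshold_opt hsh hs
  have h1 : sh - (s + g) = d - g := by rw [hd]; abel
  have h2 : s - (s + g) = -g := by abel
  rw [h1, h2] at hopt
  have hng : sqNorm (-g) = sqNorm g := by simp [sqNorm]
  rw [hng, sqNorm_sub] at hopt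
  -- so sqNorm d ≤ 2 (d ⬝ᵥ g)
  have hdg : sqNorm d ≤ 2 * (d ⬝ᵥ g) := by linarith
  -- d ⬝ᵥ g = μ * (H d ⬝ᵥ e)
  have hdg2 : d ⬝ᵥ g = μ * (H.mulVec d ⬝ᵥ e) := by
    rw [hg, dotProduct_smul, Matrix.dotProduct_mulVec, Matrix.vecMul_transpose,
      smul_eq_mul]
  -- key inner product bound: 2 * (e ⬝ᵥ H d) ≥ (1/μ) * sqNorm d
  have hkey : (1/μ) * sqNorm d ≤ 2 * (H.mulVec d ⬝ᵥ e) := by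
    rw [hdg2] at hdg
    have := (div_le_iff₀ hμ0).mpr (by linarith : sqNorm d ≤ (2 * (H.mulVec d ⬝ᵥ e)) * μ)
    calc (1/μ) * sqNorm d = sqNorm d / μ := by ring
      _ ≤ 2 * (H.mulVec d ⬝ᵥ e) := this
  -- spectral norm bound
  have hspec : sqNorm (H.mulVec d) ≤ (specNorm H)^2 * sqNorm d := sqNorm_mulVec_le H d
  -- expand the target
  have hexp : y - H.mulVec sh = e - H.mulVec d := by
    rw [he, hd, Matrix.mulVec_sub]; abel
  rw [hexp, sqNorm_sub]
  have hcomm : e ⬝ᵥ H.mulVec d = H.mulVec d ⬝ᵥ e := dotProduct_comm _ _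
  rw [hcomm]
  nlinarith [sqNorm_nonneg d]
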